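/- In ℤ[t], the polynomial t³ + t − 1 does not divide the polynomial t¹³ − t¹² − t⁹ + t⁸ + t⁶ − t + 1. -/
import Mathlib

open Polynomial

theorem jones_trefoil_not_dvd_cable :
    ¬ ((X ^ 3 + X - 1 : Polynomial ℤ) ∣
        (X ^ 13 - X ^ 12 - X ^ 9 + X ^ 8 + X ^ 6 - X + 1)) := by
  intro h
  have h2 := Polynomial.eval_dvd (x := (2 : ℤ)) h
  simp only [eval_sub, eval_add, eval_pow, eval_X, eval_one] at h2
  norm_num at h2
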